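/- Let T > 0, λ : [0,T] → [0,∞) continuous with λ > 0 on (0,T], Λ(t) := ∫₀ᵗ λ(s) ds, and fix ε ∈ (0, 1/2) and C > 0. Let θ : (0,T] × ℝ^d × ℝ^d → ℝ be differentiable in (x,ξ) with |∇ₓθ(t,x,ξ)| ≤ C·(λ(t)/√Λ(t))·⟨x⟩^{−1/2+ε}·⟨ξ⟩^{1/2+ε} and |∇_ξθ(t,x,ξ)| ≤ C·(λ(t)/√Λ(t))·⟨x⟩^{1/2+ε}·⟨ξ⟩^{−1/2+ε}. If q, p : [s, t₀] → ℝ^d (0 < s ≤ t₀ ≤ T) solve q' = ∇_ξθ(τ,q,p), p' = −∇ₓθ(τ,q,p) with q(s) = y, p(s) = η, then there is C' > 0 depending only on C and ε such that for all t ∈ [s, t₀]: ⟨η⟩·e^{−C'(√Λ(t)−√Λ(s))} ≤ ⟨p(t)⟩ ≤ ⟨η⟩·e^{C'(√Λ(t)−√Λ(s))} and ⟨y⟩·e^{−C'(√Λ(t)−√Λ(s))} ≤ ⟨q(t)⟩ ≤ ⟨y⟩·e^{C'(√Λ(t)−√Λ(s))}. -/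

import Mathlib

/-- `Λ(t) = ∫₀ᵗ λ(s) ds`. -/
noncomputable def Lam (lam : ℝ → ℝ) (t : ℝ) : ℝ := ∫ s in (0:ℝ)..t, lam s

/-- The weight `⟨y⟩ = (e + |y|²)^{1/2}`. -/
noncomputable def jw {d : ℕ} (y : EuclideanSpace ℝ (Fin d)) : ℝ :=
  Real.sqrt (Real.exp 1 + ‖y‖ ^ 2)

/-!
Since `ε < 1/2`, the symbol bounds give `⟨x⟩^{-1/2+ε} ≤ 1` and `⟨ξ⟩^{1/2+ε} ≤ ⟨ξ⟩`, so along the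
flow `|p'| ≤ C λ/√Λ ⟨p⟩` and `|q'| ≤ C λ/√Λ ⟨q⟩`. For any curve `u`,
`|(log ⟨u⟩)'| = |⟪u, u'⟫| / ⟨u⟩² ≤ |u'| / ⟨u⟩`, hence `log ⟨u⟩` moves by at most
`∫ₛᵗ C λ/√Λ = 2C (√Λ(t) − √Λ(s))`, and `C' = 2C` works.
-/

open Set Real
open scoped RealInnerProductSpace Topology

theorem norm_image_sub_le_of_norm_deriv_le_deriv_boundary {E : Type*} [NormedAddCommGroup E]
    [NormedSpace ℝ E] {f f' : ℝ → E} {B B' : ℝ → ℝ} {a b : ℝ}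
    (hf : ∀ x ∈ Icc a b, HasDerivWithinAt f (f' x) (Icc a b) x)
    (hB : ContinuousOn B (Icc a b)) (hB' : ∀ x ∈ Ico a b, HasDerivWithinAt B (B' x) (Ici x) x)
    (bound : ∀ x ∈ Ico a b, ‖f' x‖ ≤ B' x) :
    ∀ x ∈ Icc a b, ‖f x - f a‖ ≤ B x - B a := by
  refine image_norm_le_of_norm_deriv_right_le_deriv_boundary'
    (fun x hx => ((hf x hx).sub_const (f a)).continuousWithinAt)
    (fun x hx => ?_) (by simp) (hB.sub continuousOn_const)
    (fun x hx => (hB' x hx).sub_const (B a)) bound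
  exact ((hf x (Ico_subset_Icc_self hx)).sub_const (f a)).mono_of_mem_nhdsWithin
    (Icc_mem_nhdsGE_of_mem hx)

section Weight

variable {d : ℕ}

lemma jw_pos (y : EuclideanSpace ℝ (Fin d)) : 0 < jw y :=
  sqrt_pos.mpr (by positivity)

lemma one_le_jw (y : EuclideanSpace ℝ (Fin d)) : 1 ≤ jw y :=
  one_le_sqrt.mpr (by linarith [add_one_le_exp (1 : ℝ), sq_nonneg ‖y‖])

lemma norm_le_jw (y : EuclideanSpace ℝ (Fin d)) : ‖y‖ ≤ jw y :=
  le_sqrt_of_sq_le (by linarith [exp_pos 1])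

lemma abs_inner_div_jw_sq_le (y v : EuclideanSpace ℝ (Fin d)) :
    |⟪y, v⟫| / jw y ^ 2 ≤ ‖v‖ / jw y := by
  have hy := jw_pos y
  rw [div_le_div_iff₀ (by positivity) hy, pow_two, ← mul_assoc]
  gcongr
  calc |⟪y, v⟫| ≤ ‖y‖ * ‖v‖ := abs_real_inner_le_norm y v
    _ ≤ jw y * ‖v‖ := by gcongr; exact norm_le_jw y
    _ = ‖v‖ * jw y := mul_comm _ _

lemma hasDerivWithinAt_log_jw {u : ℝ → EuclideanSpace ℝ (Fin d)} {u' : EuclideanSpace ℝ (Fin d)}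
    {s : Set ℝ} {τ : ℝ} (hu : HasDerivWithinAt u u' s τ) :
    HasDerivWithinAt (fun r => log (jw (u r))) (⟪u τ, u'⟫ / jw (u τ) ^ 2) s τ := by
  refine (((hu.norm_sq.const_add (exp 1)).sqrt (by positivity)).log
    (jw_pos (u τ)).ne').congr_deriv ?_
  change 2 * ⟪u τ, u'⟫ / (2 * jw (u τ)) / jw (u τ) = _
  field_simp

theorem jw_bounds_of_norm_deriv_le {u u' : ℝ → EuclideanSpace ℝ (Fin d)} {B B' : ℝ → ℝ}
    {a b : ℝ} (hu : ∀ τ ∈ Icc a b, HasDerivWithinAt u (u' τ) (Icc a b) τ)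
    (hB : ContinuousOn B (Icc a b)) (hB' : ∀ τ ∈ Ico a b, HasDerivWithinAt B (B' τ) (Ici τ) τ)
    (bound : ∀ τ ∈ Ico a b, ‖u' τ‖ ≤ B' τ * jw (u τ)) {t : ℝ} (ht : t ∈ Icc a b) :
    jw (u a) * exp (-(B t - B a)) ≤ jw (u t) ∧ jw (u t) ≤ jw (u a) * exp (B t - B a) := by
  have hlog_deriv : ∀ τ ∈ Ico a b, ‖⟪u τ, u' τ⟫ / jw (u τ) ^ 2‖ ≤ B' τ := by
    intro τ hτ
    rw [Real.norm_eq_abs, abs_div, abs_of_pos (pow_pos (jw_pos (u τ)) 2)]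
    calc |⟪u τ, u' τ⟫| / jw (u τ) ^ 2 ≤ ‖u' τ‖ / jw (u τ) := abs_inner_div_jw_sq_le _ _
      _ ≤ B' τ := (div_le_iff₀ (jw_pos _)).mpr (bound τ hτ)
  have hlog := norm_image_sub_le_of_norm_deriv_le_deriv_boundary
    (fun τ hτ => hasDerivWithinAt_log_jw (hu τ hτ)) hB hB' hlog_deriv t ht
  rw [Real.norm_eq_abs, abs_le] at hlog
  have hexp : ∀ τ, exp (log (jw (u τ))) = jw (u τ) := fun τ => exp_log (jw_pos (u τ))
  rw [← hexp a, ← hexp t, ← exp_add, ← exp_add, exp_le_exp, exp_le_exp]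
  constructor <;> linarith [hlog.1, hlog.2]

lemma le_mul_jw_of_le_mul_rpow {a A ε : ℝ} (hA : 0 ≤ A) (hε : ε ≤ 1 / 2)
    {x ξ : EuclideanSpace ℝ (Fin d)}
    (h : a ≤ A * jw x ^ (-(1/2 : ℝ) + ε) * jw ξ ^ ((1/2 : ℝ) + ε)) :
    a ≤ A * jw ξ := by
  have hx : jw x ^ (-(1/2 : ℝ) + ε) ≤ 1 :=
    rpow_le_one_of_one_le_of_nonpos (one_le_jw x) (by linarith)
  have hξ : jw ξ ^ ((1/2 : ℝ) + ε) ≤ jw ξ :=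
    (rpow_le_rpow_of_exponent_le (one_le_jw ξ) (by linarith)).trans_eq (rpow_one _)
  refine h.trans ?_
  rw [mul_assoc]
  gcongr
  calc jw x ^ (-(1/2 : ℝ) + ε) * jw ξ ^ ((1/2 : ℝ) + ε) ≤ 1 * jw ξ :=
        mul_le_mul hx hξ (rpow_nonneg (jw_pos ξ).le _) zero_le_one
    _ = jw ξ := one_mul _

end Weight

section Primitive

variable {lam : ℝ → ℝ} {T : ℝ}

lemma Lam_pos (hlam : ContinuousOn lam (Icc 0 T)) (hpos : ∀ t ∈ Ioc 0 T, 0 < lam t) {τ : ℝ}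
    (hτ : τ ∈ Ioc 0 T) : 0 < Lam lam τ :=
  intervalIntegral.intervalIntegral_pos_of_pos_on
    ((hlam.mono (Icc_subset_Icc_right hτ.2)).intervalIntegrable_of_Icc hτ.1.le)
    (fun x hx => hpos x ⟨hx.1, hx.2.le.trans hτ.2⟩) hτ.1

lemma continuousOn_Lam (hlam : ContinuousOn lam (Icc 0 T)) (hT : 0 ≤ T) :
    ContinuousOn (Lam lam) (Icc 0 T) := by
  have h := intervalIntegral.continuousOn_primitive_interval'
    (μ := MeasureTheory.volume) (hlam.intervalIntegrable_of_Icc hT) left_mem_uIcc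
  rwa [uIcc_of_le hT] at h

lemma hasDerivAt_Lam (hlam : ContinuousOn lam (Icc 0 T)) {τ : ℝ} (hτ : τ ∈ Ioo 0 T) :
    HasDerivAt (Lam lam) (lam τ) τ := by
  have hnhds : Icc 0 T ∈ 𝓝 τ := Icc_mem_nhds hτ.1 hτ.2
  exact intervalIntegral.integral_hasDerivAt_right
    ((hlam.mono (Icc_subset_Icc_right hτ.2.le)).intervalIntegrable_of_Icc hτ.1.le)
    ⟨Icc 0 T, hnhds, hlam.aestronglyMeasurable measurableSet_Icc⟩ (hlam.continuousAt hnhds)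

lemma hasDerivAt_sqrt_Lam (hlam : ContinuousOn lam (Icc 0 T)) (hpos : ∀ t ∈ Ioc 0 T, 0 < lam t)
    {τ : ℝ} (hτ : τ ∈ Ioo 0 T) :
    HasDerivAt (fun r => √(Lam lam r)) (lam τ / (2 * √(Lam lam τ))) τ :=
  (hasDerivAt_Lam hlam hτ).sqrt (Lam_pos hlam hpos (Ioo_subset_Ioc_self hτ)).ne'

end Primitive

theorem pd_zone_flow_comparability_general
    (d : ℕ) (C ε : ℝ) (hC : 0 < C) (hε1 : ε < 1/2) :
    ∃ C' : ℝ, 0 < C' ∧ ∀ T : ℝ, 0 < T →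
      ∀ lam : ℝ → ℝ, ContinuousOn lam (Set.Icc 0 T) →
        (∀ t ∈ Set.Icc 0 T, 0 ≤ lam t) → (∀ t ∈ Set.Ioc 0 T, 0 < lam t) →
      ∀ θ : ℝ → EuclideanSpace ℝ (Fin d) → EuclideanSpace ℝ (Fin d) → ℝ,
        (∀ t ∈ Set.Ioc 0 T, ∀ (x ξ : EuclideanSpace ℝ (Fin d)),
          DifferentiableAt ℝ (fun x' => θ t x' ξ) x) →
        (∀ t ∈ Set.Ioc 0 T, ∀ (x ξ : EuclideanSpace ℝ (Fin d)),
          DifferentiableAt ℝ (fun ξ' => θ t x ξ') ξ) →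
        (∀ t ∈ Set.Ioc 0 T, ∀ (x ξ : EuclideanSpace ℝ (Fin d)),
          ‖gradient (fun x' => θ t x' ξ) x‖ ≤
            C * (lam t / Real.sqrt (Lam lam t)) *
              jw x ^ (-(1/2 : ℝ) + ε) * jw ξ ^ ((1/2 : ℝ) + ε)) →
        (∀ t ∈ Set.Ioc 0 T, ∀ (x ξ : EuclideanSpace ℝ (Fin d)),
          ‖gradient (fun ξ' => θ t x ξ') ξ‖ ≤
            C * (lam t / Real.sqrt (Lam lam t)) *
              jw x ^ ((1/2 : ℝ) + ε) * jw ξ ^ (-(1/2 : ℝ) + ε)) →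
      ∀ s t₀ : ℝ, 0 < s → s ≤ t₀ → t₀ ≤ T →
      ∀ q p : ℝ → EuclideanSpace ℝ (Fin d),
        (∀ τ ∈ Set.Icc s t₀, HasDerivWithinAt q
          (gradient (fun ξ' => θ τ (q τ) ξ') (p τ)) (Set.Icc s t₀) τ) →
        (∀ τ ∈ Set.Icc s t₀, HasDerivWithinAt p
          (-(gradient (fun x' => θ τ x' (p τ)) (q τ))) (Set.Icc s t₀) τ) →
      ∀ t ∈ Set.Icc s t₀,
        jw (p s) * Real.exp (-(C' * (Real.sqrt (Lam lam t) - Real.sqrt (Lam lam s))))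
            ≤ jw (p t) ∧
        jw (p t) ≤
          jw (p s) * Real.exp (C' * (Real.sqrt (Lam lam t) - Real.sqrt (Lam lam s))) ∧
        jw (q s) * Real.exp (-(C' * (Real.sqrt (Lam lam t) - Real.sqrt (Lam lam s))))
            ≤ jw (q t) ∧
        jw (q t) ≤
          jw (q s) * Real.exp (C' * (Real.sqrt (Lam lam t) - Real.sqrt (Lam lam s))) := by
  refine ⟨2 * C, by positivity, ?_⟩
  intro T hT lam hlam hlam0 hlampos θ _ _ hθx hθξ s t₀ hs hst₀ ht₀T q p hq hp t ht
  have hIcc : Icc s t₀ ⊆ Ioc 0 T := fun τ hτ => ⟨hs.trans_le hτ.1, hτ.2.trans ht₀T⟩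
  have hIco : Ico s t₀ ⊆ Ioo 0 T := fun τ hτ => ⟨hs.trans_le hτ.1, hτ.2.trans_le ht₀T⟩
  have hB : ContinuousOn (fun r => 2 * C * √(Lam lam r)) (Icc s t₀) :=
    continuousOn_const.mul ((continuousOn_Lam hlam hT.le).sqrt.mono
      (Icc_subset_Icc hs.le ht₀T))
  have hB' : ∀ τ ∈ Ico s t₀, HasDerivWithinAt (fun r => 2 * C * √(Lam lam r))
      (C * (lam τ / √(Lam lam τ))) (Ici τ) τ := fun τ hτ =>
    (((hasDerivAt_sqrt_Lam hlam hlampos (hIco hτ)).const_mul (2 * C)).congr_deriv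
      (by ring)).hasDerivWithinAt
  have hrate : ∀ τ ∈ Ico s t₀, 0 ≤ C * (lam τ / √(Lam lam τ)) := by
    intro τ hτ
    have := hlam0 τ (Ioc_subset_Icc_self (hIcc (Ico_subset_Icc_self hτ)))
    positivity
  obtain ⟨hp₁, hp₂⟩ := jw_bounds_of_norm_deriv_le hp hB hB' (fun τ hτ => by
    rw [norm_neg]
    exact le_mul_jw_of_le_mul_rpow (hrate τ hτ) hε1.le
      (hθx τ (hIcc (Ico_subset_Icc_self hτ)) (q τ) (p τ))) ht
  obtain ⟨hq₁, hq₂⟩ := jw_bounds_of_norm_deriv_le hq hB hB' (fun τ hτ =>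
    le_mul_jw_of_le_mul_rpow (hrate τ hτ) hε1.le <|
      (hθξ τ (hIcc (Ico_subset_Icc_self hτ)) (q τ) (p τ)).trans_eq (by ring)) ht
  simp only [← mul_sub] at hp₁ hp₂ hq₁ hq₂
  exact ⟨hp₁, hp₂, hq₁, hq₂⟩

/-- From the proof of Lemma 5.3 of the paper: in the pseudodifferential zone, the
Hamiltonian flow satisfies `⟨p(t)⟩ ≍ ⟨η⟩`, `⟨q(t)⟩ ≍ ⟨y⟩` up to factors
`e^{±C'(√Λ(t)−√Λ(s))}`, with `C'` depending only on `C` and `ε`. -/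
theorem pd_zone_flow_comparability
    (d : ℕ) (C ε : ℝ) (hC : 0 < C) (hε0 : 0 < ε) (hε1 : ε < 1/2) :
    ∃ C' : ℝ, 0 < C' ∧ ∀ T : ℝ, 0 < T →
      ∀ lam : ℝ → ℝ, ContinuousOn lam (Set.Icc 0 T) →
        (∀ t ∈ Set.Icc 0 T, 0 ≤ lam t) → (∀ t ∈ Set.Ioc 0 T, 0 < lam t) →
      ∀ θ : ℝ → EuclideanSpace ℝ (Fin d) → EuclideanSpace ℝ (Fin d) → ℝ,
        (∀ t ∈ Set.Ioc 0 T, ∀ (x ξ : EuclideanSpace ℝ (Fin d)),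
          DifferentiableAt ℝ (fun x' => θ t x' ξ) x) →
        (∀ t ∈ Set.Ioc 0 T, ∀ (x ξ : EuclideanSpace ℝ (Fin d)),
          DifferentiableAt ℝ (fun ξ' => θ t x ξ') ξ) →
        (∀ t ∈ Set.Ioc 0 T, ∀ (x ξ : EuclideanSpace ℝ (Fin d)),
          ‖gradient (fun x' => θ t x' ξ) x‖ ≤
            C * (lam t / Real.sqrt (Lam lam t)) *
              jw x ^ (-(1/2 : ℝ) + ε) * jw ξ ^ ((1/2 : ℝ) + ε)) →
        (∀ t ∈ Set.Ioc 0 T, ∀ (x ξ : EuclideanSpace ℝ (Fin d)),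
          ‖gradient (fun ξ' => θ t x ξ') ξ‖ ≤
            C * (lam t / Real.sqrt (Lam lam t)) *
              jw x ^ ((1/2 : ℝ) + ε) * jw ξ ^ (-(1/2 : ℝ) + ε)) →
      ∀ s t₀ : ℝ, 0 < s → s ≤ t₀ → t₀ ≤ T →
      ∀ q p : ℝ → EuclideanSpace ℝ (Fin d),
        (∀ τ ∈ Set.Icc s t₀, HasDerivWithinAt q
          (gradient (fun ξ' => θ τ (q τ) ξ') (p τ)) (Set.Icc s t₀) τ) →
        (∀ τ ∈ Set.Icc s t₀, HasDerivWithinAt p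
          (-(gradient (fun x' => θ τ x' (p τ)) (q τ))) (Set.Icc s t₀) τ) →
      ∀ t ∈ Set.Icc s t₀,
        jw (p s) * Real.exp (-(C' * (Real.sqrt (Lam lam t) - Real.sqrt (Lam lam s))))
            ≤ jw (p t) ∧
        jw (p t) ≤
          jw (p s) * Real.exp (C' * (Real.sqrt (Lam lam t) - Real.sqrt (Lam lam s))) ∧
        jw (q s) * Real.exp (-(C' * (Real.sqrt (Lam lam t) - Real.sqrt (Lam lam s))))
            ≤ jw (q t) ∧
        jw (q t) ≤
          jw (q s) * Real.exp (C' * (Real.sqrt (Lam lam t) - Real.sqrt (Lam lam s))) :=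
  pd_zone_flow_comparability_general d C ε hC hε1
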